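/- arXiv:math-ph/0301038 — 3 statements merged into one kernel-verified Lean document; each statement's English description precedes it below -/
import Mathlib

section
/- Let B > 0, F ∈ ℝ, u = F/B, let t > 0 satisfy sin(Bt) ≠ 0, and let (x₀,y₀), (x,y) ∈ ℝ². Let w_cl be the classical trajectory w_x^{cl}(s) = (1/2)[(y−y₀−ut)+(x−x₀)cot(Bt)]sin(2Bs) − (1/2)[(x−x₀)−(y−y₀−ut)cot(Bt)]cos(2Bs) + (1/2)[(x+x₀)−(y−y₀−ut)cot(Bt)], w_y^{cl}(s) = −(1/2)[(x−x₀)−(y−y₀−ut)cot(Bt)]sin(2Bs) − (1/2)[(y−y₀−ut)+(x−x₀)cot(Bt)]cos(2Bs) + (1/2)[(y+y₀−ut)+(x−x₀)cot(Bt)] + us. Then the classical action satisfies S_t[w_cl] = ∫₀ᵗ L(w_cl(s), ẇ_cl(s)) ds = (F²/(4B²))t + (F/(2B))(y−y₀−(F/B)t) − (B/2)(x+x₀)(y−y₀−(F/B)t) + (B/4)cot(Bt)[(y−y₀−(F/B)t)² + (x−x₀)²]. -/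
/-!
The classical path is a trochoid: uniform drift with velocity `u = F/B` in the `y` direction
superposed on a circular motion of angular frequency `2B`. Along any such path the Lagrangian is
a trigonometric polynomial in `2Bs` with an explicit primitive, so the action follows from the
fundamental theorem of calculus. For the path through the two given endpoints, the amplitudes are
affine in `c = cot (Bt)`, and `sin (2Bt)`, `cos (2Bt)` are rational functions of `c`; the closed
form is then a rational identity in `c`.
-/

open intervalIntegral

/-- The action `S_t[w] = ∫₀ᵗ L(w(s), ẇ(s)) ds` over `[0,t]` for the Lagrangian
`L(w, ẇ) = (1/4)(ẇₓ² + ẇ_y²) + F·wₓ − B·ẇ_y·wₓ` of a planar charged particle in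
crossed constant magnetic and electric fields. -/
noncomputable def action (B F t : ℝ) (wx wy : ℝ → ℝ) : ℝ :=
  ∫ s in (0:ℝ)..t,
    ((1/4) * ((deriv wx s)^2 + (deriv wy s)^2) + F * wx s - B * deriv wy s * wx s)

open Real

section Trochoid

variable (B u A C D : ℝ)

noncomputable def trochoidX (s : ℝ) : ℝ := A * sin (2 * B * s) - C * cos (2 * B * s) + D

noncomputable def trochoidY (s : ℝ) : ℝ :=
  -C * sin (2 * B * s) - A * cos (2 * B * s) + D + u * s

theorem deriv_trochoidX :
    deriv (trochoidX B A C D) = fun s => 2 * B * (A * cos (2 * B * s) + C * sin (2 * B * s)) := by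
  funext s
  have h := hasDerivAt_const_mul (x := s) (2 * B)
  refine ((((h.sin.const_mul A).sub (h.cos.const_mul C)).add_const D).congr_deriv ?_).deriv
  ring

theorem deriv_trochoidY :
    deriv (trochoidY B u A C D) =
      fun s => 2 * B * (A * sin (2 * B * s) - C * cos (2 * B * s)) + u := by
  funext s
  have h := hasDerivAt_const_mul (x := s) (2 * B)
  refine (((((h.sin.const_mul (-C)).sub (h.cos.const_mul A)).add_const D).add
    (hasDerivAt_const_mul u)).congr_deriv ?_).deriv
  ring

theorem action_trochoid {F : ℝ} (hF : F = B * u) (D' t : ℝ) :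
    action B F t (trochoidX B A C D) (trochoidY B u A C D') =
      u ^ 2 / 4 * t + (u / 2 - B * D) * (A * (1 - cos (2 * B * t)) - C * sin (2 * B * t))
        + B / 2 * sin (2 * B * t) *
          ((A ^ 2 - C ^ 2) * cos (2 * B * t) + 2 * A * C * sin (2 * B * t)) := by
  subst hF
  rw [action, deriv_trochoidX, deriv_trochoidY,
    integral_eq_sub_of_hasDerivAt (fun s _ => ?primitive)]
  case primitive =>
    -- the right-hand side, as a function of `t`, is a primitive of the Lagrangian along the path
    have h := hasDerivAt_const_mul (x := s) (2 * B)
    refine (((hasDerivAt_const_mul (u ^ 2 / 4)).add ((((h.cos.const_sub 1).const_mul A).sub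
      (h.sin.const_mul C)).const_mul (u / 2 - B * D))).add ((h.sin.const_mul (B / 2)).mul
      ((h.cos.const_mul (A ^ 2 - C ^ 2)).add (h.sin.const_mul (2 * A * C))))).congr_deriv ?_
    simp only [trochoidX, Pi.add_apply]
    ring
  · simp
  · apply Continuous.intervalIntegrable
    unfold trochoidX
    fun_prop

end Trochoid

theorem sin_two_mul_eq_two_mul_cot_div {θ : ℝ} (h : sin θ ≠ 0) :
    sin (2 * θ) = 2 * cot θ / (1 + cot θ ^ 2) := by
  rw [cot_eq_cos_div_sin, sin_two_mul]
  field_simp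
  linear_combination cos θ * sin_sq_add_cos_sq θ

theorem cos_two_mul_eq_cot_sq_sub_one_div {θ : ℝ} (h : sin θ ≠ 0) :
    cos (2 * θ) = (cot θ ^ 2 - 1) / (1 + cot θ ^ 2) := by
  rw [cot_eq_cos_div_sin, cos_two_mul']
  field_simp
  linear_combination (cos θ ^ 2 - sin θ ^ 2) * sin_sq_add_cos_sq θ

theorem stmt4_general (B F t x₀ y₀ x y : ℝ)
    (hs : Real.sin (B*t) ≠ 0) :
    let u : ℝ := F / B
    let c : ℝ := Real.cot (B*t)
    let wx : ℝ → ℝ := fun s =>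
      (1/2) * ((y - y₀ - u*t) + (x - x₀)*c) * Real.sin (2*B*s)
      - (1/2) * ((x - x₀) - (y - y₀ - u*t)*c) * Real.cos (2*B*s)
      + (1/2) * ((x + x₀) - (y - y₀ - u*t)*c)
    let wy : ℝ → ℝ := fun s =>
      -(1/2) * ((x - x₀) - (y - y₀ - u*t)*c) * Real.sin (2*B*s)
      - (1/2) * ((y - y₀ - u*t) + (x - x₀)*c) * Real.cos (2*B*s)
      + (1/2) * ((y + y₀ - u*t) + (x - x₀)*c) + u*s
    action B F t wx wy =
      F^2/(4*B^2) * t + F/(2*B) * (y - y₀ - F/B*t)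
      - B/2 * (x + x₀) * (y - y₀ - F/B*t)
      + B/4 * Real.cot (B*t) * ((y - y₀ - F/B*t)^2 + (x - x₀)^2) := by
  intro u c wx wy
  have hB : B ≠ 0 := by rintro rfl; simp at hs
  have hF : F = B * u := by simp only [u]; field_simp
  have hwx : wx = trochoidX B ((y - y₀ - u * t + (x - x₀) * c) / 2)
      ((x - x₀ - (y - y₀ - u * t) * c) / 2) ((x + x₀ - (y - y₀ - u * t) * c) / 2) := by
    funext s; simp only [wx, trochoidX]; ring
  have hwy : wy = trochoidY B u ((y - y₀ - u * t + (x - x₀) * c) / 2)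
      ((x - x₀ - (y - y₀ - u * t) * c) / 2) ((y + y₀ - u * t + (x - x₀) * c) / 2) := by
    funext s; simp only [wy, trochoidY]; ring
  rw [hwx, hwy, action_trochoid _ _ _ _ _ hF, mul_assoc, sin_two_mul_eq_two_mul_cot_div hs,
    cos_two_mul_eq_cot_sq_sub_one_div hs]
  simp only [u, c]
  field_simp
  ring

/-- The classical action of the crossed-fields trajectory joining `(x₀,y₀)` at time `0`
to `(x,y)` at time `t` equals
`(F²/(4B²))t + (F/(2B))(y−y₀−(F/B)t) − (B/2)(x+x₀)(y−y₀−(F/B)t)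
  + (B/4)cot(Bt)[(y−y₀−(F/B)t)² + (x−x₀)²]`. -/
theorem stmt4 (B F t x₀ y₀ x y : ℝ) (hB : 0 < B) (ht : 0 < t)
    (hs : Real.sin (B*t) ≠ 0) :
    let u : ℝ := F / B
    let c : ℝ := Real.cot (B*t)
    let wx : ℝ → ℝ := fun s =>
      (1/2) * ((y - y₀ - u*t) + (x - x₀)*c) * Real.sin (2*B*s)
      - (1/2) * ((x - x₀) - (y - y₀ - u*t)*c) * Real.cos (2*B*s)
      + (1/2) * ((x + x₀) - (y - y₀ - u*t)*c)
    let wy : ℝ → ℝ := fun s =>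
      -(1/2) * ((x - x₀) - (y - y₀ - u*t)*c) * Real.sin (2*B*s)
      - (1/2) * ((y - y₀ - u*t) + (x - x₀)*c) * Real.cos (2*B*s)
      + (1/2) * ((y + y₀ - u*t) + (x - x₀)*c) + u*s
    action B F t wx wy =
      F^2/(4*B^2) * t + F/(2*B) * (y - y₀ - F/B*t)
      - B/2 * (x + x₀) * (y - y₀ - F/B*t)
      + B/4 * Real.cot (B*t) * ((y - y₀ - F/B*t)^2 + (x - x₀)^2) :=
  stmt4_general B F t x₀ y₀ x y hs
end

section
/- Let B, F ∈ ℝ with B ≠ 0 and fix (x₀,y₀) ∈ ℝ². Define S(t,x,y) = (F²/(4B²))t + (F/(2B))(y−y₀−(F/B)t) − (B/2)(x+x₀)(y−y₀−(F/B)t) + (B/4)cot(Bt)[(y−y₀−(F/B)t)² + (x−x₀)²] and K(t,x,y) = e^{iS(t,x,y)}/sin(Bt). Then on the open set {(t,x,y) : sin(Bt) ≠ 0}, K satisfies the time-dependent Schrödinger equation i∂_tK = −∂ₓ²K − ∂_y²K − 2iBx·∂_yK + B²x²·K − Fx·K, i.e. i∂_tK = [(−i∂_x)² + (−i∂_y +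 Bx)² − Fx]K; in other words, the semiclassical propagator formula for the crossed-fields Hamiltonian is an exact solution of the Schrödinger equation. -/
/-!
Write `K = e^{iS} / D` with amplitude `D(t) = sin(Bt)`. Since `D` does not depend on `x, y`,
the Schrödinger equation for `K` splits into a real part, the Hamilton–Jacobi equation
`∂ₜS + (∂ₓS)² + (∂_yS + Bx)² − Fx = 0`, and an imaginary part, the transport equation
`D'/D = ∂ₓ²S + ∂_y²S`. The action is quadratic in `x` and `y` with `∂ₓ²S = ∂_y²S = (B/2) cot(Bt)`,
so transport is `(sin(Bt))' = B cot(Bt) sin(Bt)`, and Hamilton–Jacobi reduces to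
`1 + cot²(Bt) = 1 / sin²(Bt)`.
-/

open Complex

theorem Real.hasDerivAt_cot {x : ℝ} (h : Real.sin x ≠ 0) :
    HasDerivAt Real.cot (-1 / Real.sin x ^ 2) x := by
  have hcot : Real.cot = fun y => Real.cos y / Real.sin y := funext Real.cot_eq_cos_div_sin
  rw [hcot]
  refine ((Real.hasDerivAt_cos x).div (Real.hasDerivAt_sin x) h).congr_deriv ?_
  rw [← Real.sin_sq_add_cos_sq x]
  ring

theorem hasDerivAt_cexp_I_mul_ofReal_div {f : ℝ → ℝ} {f' p : ℝ} (hf : HasDerivAt f f' p)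
    (d : ℂ) :
    HasDerivAt (fun x => cexp (I * f x) / d) (I * f' * (cexp (I * f p) / d)) p :=
  ((hf.ofReal_comp.const_mul I).cexp.div_const d).congr_deriv (by ring)

theorem deriv_deriv_cexp_I_mul_ofReal_div {f f' : ℝ → ℝ} {f'' x : ℝ}
    (hf : ∀ p, HasDerivAt f (f' p) p) (hf' : HasDerivAt f' f'' x) (d : ℂ) :
    deriv (fun x' => deriv (fun x'' => cexp (I * f x'') / d) x') x
      = (I * f'' - f' x ^ 2) * (cexp (I * f x) / d) := by
  have hderiv : (fun x' => deriv (fun x'' => cexp (I * f x'') / d) x')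
      = fun x' => I * f' x' * (cexp (I * f x') / d) :=
    funext fun p => (hasDerivAt_cexp_I_mul_ofReal_div (hf p) d).deriv
  rw [hderiv]
  refine (((hf'.ofReal_comp.const_mul I).mul
    (hasDerivAt_cexp_I_mul_ofReal_div (hf x) d)).congr_deriv ?_).deriv
  linear_combination (f' x : ℂ) ^ 2 * (cexp (I * f x) / d) * I_sq

theorem crossedFields_schrodinger_of_hamiltonJacobi (B F : ℝ) {S : ℝ → ℝ → ℝ → ℝ}
    {Sx Sy D : ℝ → ℝ} {t x y St Sxx Syy D' : ℝ}
    (hSt : HasDerivAt (fun τ => S τ x y) St t)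
    (hSx : ∀ p, HasDerivAt (fun x' => S t x' y) (Sx p) p) (hSxx : HasDerivAt Sx Sxx x)
    (hSy : ∀ q, HasDerivAt (fun y' => S t x y') (Sy q) q) (hSyy : HasDerivAt Sy Syy y)
    (hD : HasDerivAt D D' t) (hD₀ : D t ≠ 0)
    (hamiltonJacobi : St + Sx x ^ 2 + (Sy y + B * x) ^ 2 - F * x = 0)
    (transport : D' = (Sxx + Syy) * D t) :
    let K : ℝ → ℝ → ℝ → ℂ := fun t x y => cexp (I * S t x y) / D t
    I * deriv (fun τ => K τ x y) t
      = - deriv (fun x' => deriv (fun x'' => K t x'' y) x') x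
        - deriv (fun y' => deriv (fun y'' => K t x y'') y') y
        - 2 * I * B * x * deriv (fun y' => K t x y') y
        + B ^ 2 * x ^ 2 * K t x y - F * x * K t x y := by
  intro K
  have hD₀' : (D t : ℂ) ≠ 0 := ofReal_ne_zero.mpr hD₀
  have hKt : deriv (fun τ => K τ x y) t = (I * St - D' / D t) * K t x y := by
    refine (((hSt.ofReal_comp.const_mul I).cexp.div hD.ofReal_comp hD₀').congr_deriv ?_).deriv
    simp only [K]
    field_simp
  have hKy : deriv (fun y' => K t x y') y = I * Sy y * K t x y :=
    (hasDerivAt_cexp_I_mul_ofReal_div (hSy y) _).deriv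
  rw [hKt, hKy, deriv_deriv_cexp_I_mul_ofReal_div hSx hSxx,
    deriv_deriv_cexp_I_mul_ofReal_div hSy hSyy]
  have hHJ : (St : ℂ) + Sx x ^ 2 + (Sy y + B * x) ^ 2 - F * x = 0 := by
    exact_mod_cast hamiltonJacobi
  have htr : (D' : ℂ) / D t = Sxx + Syy := by
    rw [div_eq_iff hD₀']; exact_mod_cast transport
  rw [htr]
  linear_combination (-K t x y) * hHJ + (St + 2 * Sy y * B * x) * K t x y * I_sq

noncomputable def crossedFieldsAction (B F x₀ y₀ t x y : ℝ) : ℝ :=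
  F^2/(4*B^2) * t + F/(2*B) * (y - y₀ - F/B*t)
    - B/2 * (x + x₀) * (y - y₀ - F/B*t)
    + B/4 * Real.cot (B*t) * ((y - y₀ - F/B*t)^2 + (x - x₀)^2)

namespace crossedFieldsAction

variable (B F x₀ y₀ : ℝ)

noncomputable def derivX (t x y : ℝ) : ℝ :=
  B/2 * (Real.cot (B*t) * (x - x₀) - (y - y₀ - F/B*t))

noncomputable def derivY (t x y : ℝ) : ℝ :=
  F/(2*B) - B/2 * (x + x₀) + B/2 * Real.cot (B*t) * (y - y₀ - F/B*t)

noncomputable def derivT (t x y : ℝ) : ℝ :=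
  F^2/(4*B^2) - F/(2*B) * (F/B) + B/2 * (x + x₀) * (F/B)
    - B^2/(4 * Real.sin (B*t)^2) * ((y - y₀ - F/B*t)^2 + (x - x₀)^2)
    - B/2 * Real.cot (B*t) * (y - y₀ - F/B*t) * (F/B)

theorem hasDerivAt_x (t x y : ℝ) :
    HasDerivAt (fun x => crossedFieldsAction B F x₀ y₀ t x y) (derivX B F x₀ y₀ t x y) x := by
  have hlin := ((hasDerivAt_id x).add_const x₀).const_mul (B/2) |>.mul_const (y - y₀ - F/B*t)
  have hsq := ((hasDerivAt_id x).sub_const x₀).pow 2 |>.const_add ((y - y₀ - F/B*t)^2)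
    |>.const_mul (B/4 * Real.cot (B*t))
  refine (((hasDerivAt_const x (F^2/(4*B^2) * t + F/(2*B) * (y - y₀ - F/B*t))).sub hlin).add
    hsq).congr_deriv ?_
  simp only [derivX, id]; ring

theorem hasDerivAt_y (t x y : ℝ) :
    HasDerivAt (fun y => crossedFieldsAction B F x₀ y₀ t x y) (derivY B F x₀ y₀ t x y) y := by
  have hu := ((hasDerivAt_id y).sub_const y₀).sub_const (F/B*t)
  refine ((((hasDerivAt_const y (F^2/(4*B^2) * t)).add (hu.const_mul (F/(2*B)))).sub
    (hu.const_mul (B/2 * (x + x₀)))).add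
    ((hu.pow 2).add_const ((x - x₀)^2) |>.const_mul (B/4 * Real.cot (B*t)))).congr_deriv ?_
  simp only [derivY, id]; ring

theorem hasDerivAt_t {t : ℝ} (x y : ℝ) (hs : Real.sin (B*t) ≠ 0) :
    HasDerivAt (fun t => crossedFieldsAction B F x₀ y₀ t x y) (derivT B F x₀ y₀ t x y) t := by
  have hu := (hasDerivAt_const_mul (x := t) (F/B)).const_sub (y - y₀)
  have hcot := (Real.hasDerivAt_cot hs).comp t (hasDerivAt_const_mul B)
  refine ((((hasDerivAt_const_mul (F^2/(4*B^2))).add (hu.const_mul (F/(2*B)))).sub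
    (hu.const_mul (B/2 * (x + x₀)))).add
    ((hcot.const_mul (B/4)).mul ((hu.pow 2).add_const ((x - x₀)^2)))).congr_deriv ?_
  simp only [derivT, Function.comp_apply, Pi.pow_apply]; ring

theorem hasDerivAt_derivX (t x y : ℝ) :
    HasDerivAt (fun x => derivX B F x₀ y₀ t x y) (B/2 * Real.cot (B*t)) x :=
  (((hasDerivAt_id x).sub_const x₀).const_mul (Real.cot (B*t)) |>.sub_const
    (y - y₀ - F/B*t) |>.const_mul (B/2)).congr_deriv (by simp)

theorem hasDerivAt_derivY (t x y : ℝ) :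
    HasDerivAt (fun y => derivY B F x₀ y₀ t x y) (B/2 * Real.cot (B*t)) y :=
  ((((hasDerivAt_id y).sub_const y₀).sub_const (F/B*t)).const_mul (B/2 * Real.cot (B*t))
    |>.const_add (F/(2*B) - B/2 * (x + x₀))).congr_deriv (by simp)

theorem hamiltonJacobi {t : ℝ} (x y : ℝ) (hB : B ≠ 0) (hs : Real.sin (B*t) ≠ 0) :
    derivT B F x₀ y₀ t x y + derivX B F x₀ y₀ t x y ^ 2 + (derivY B F x₀ y₀ t x y + B * x) ^ 2
      - F * x = 0 := by
  simp only [derivT, derivX, derivY, Real.cot_eq_cos_div_sin]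
  field_simp
  linear_combination 4 * B ^ 2 * ((B * (y - y₀) - F * t) ^ 2 + B ^ 2 * (x - x₀) ^ 2)
    * Real.sin_sq_add_cos_sq (B * t)

end crossedFieldsAction

/-- The semiclassical propagator `K(t,x,y) = e^{iS(t,x,y)}/sin(Bt)` built from the
classical crossed-fields action `S` is an exact solution of the time-dependent
Schrödinger equation `i∂ₜK = (−i∂ₓ)²K + (−i∂_y + Bx)²K − FxK` on the open set
`{(t,x,y) : sin(Bt) ≠ 0}`. -/
theorem stmt8 (B F x₀ y₀ : ℝ) (hB : B ≠ 0) :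
    let S : ℝ → ℝ → ℝ → ℝ := fun t x y =>
      F^2/(4*B^2) * t + F/(2*B) * (y - y₀ - F/B*t)
      - B/2 * (x + x₀) * (y - y₀ - F/B*t)
      + B/4 * Real.cot (B*t) * ((y - y₀ - F/B*t)^2 + (x - x₀)^2)
    let K : ℝ → ℝ → ℝ → ℂ := fun t x y =>
      Complex.exp (Complex.I * (S t x y : ℝ)) / (Real.sin (B*t) : ℂ)
    ∀ t x y : ℝ, Real.sin (B*t) ≠ 0 →
      Complex.I * deriv (fun τ => K τ x y) t
        = - deriv (fun x' => deriv (fun x'' => K t x'' y) x') x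
          - deriv (fun y' => deriv (fun y'' => K t x y'') y') y
          - 2 * Complex.I * (B : ℂ) * (x : ℂ) * deriv (fun y' => K t x y') y
          + (B : ℂ)^2 * (x : ℂ)^2 * K t x y
          - (F : ℂ) * (x : ℂ) * K t x y := by
  intro S K t x y hs
  have transport : Real.cos (B*t) * B
      = (B/2 * Real.cot (B*t) + B/2 * Real.cot (B*t)) * Real.sin (B*t) := by
    rw [Real.cot_eq_cos_div_sin]; field_simp; ring
  exact crossedFields_schrodinger_of_hamiltonJacobi B F (S := crossedFieldsAction B F x₀ y₀)
    (crossedFieldsAction.hasDerivAt_t B F x₀ y₀ x y hs)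
    (fun p => crossedFieldsAction.hasDerivAt_x B F x₀ y₀ t p y)
    (crossedFieldsAction.hasDerivAt_derivX B F x₀ y₀ t x y)
    (fun q => crossedFieldsAction.hasDerivAt_y B F x₀ y₀ t x q)
    (crossedFieldsAction.hasDerivAt_derivY B F x₀ y₀ t x y)
    (hasDerivAt_const_mul B).sin hs (crossedFieldsAction.hamiltonJacobi B F x₀ y₀ x y hB hs)
    transport
end

section
/- Let B > 0, F ∈ ℝ, u = F/B, let γ < δ < 0, let f, g : ℝ² → ℂ be bounded measurable functions with compact support, and for each t > 0 let Φ_t : ℝ⁴ → ℝ be a measurable (real-valued) phase function. For t > 0 with sin(Bt) ≠ 0 define the kernel K_t(x,y,x₀,y₀) = (2π)⁻¹√(B/2)·e^{γt}·f(x,y)·g(x₀,y₀)·e^{iΦ_t(x,y,x₀,y₀)}·(sin(Bt))⁻¹·[γ + B·cot(Bt) + (i/4)(u² − 2F(x+x₀) − (B²/sin²(Bt))((x−x₀)² + (y−y₀+ut)²) + 2F·cot(Bt)·(y−y₀+ut))]. Then there exists a constant C > 0, depending only on f, g, F, B, γ, δ, such that for every t > 0 with sin(Bt) ≠ 0 the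 Hilbert–Schmidt (L²) norm of K_t satisfies (∫_{ℝ⁴}|K_t(x,y,x₀,y₀)|² dx dy dx₀ dy₀)^{1/2} ≤ C·e^{δt}/|sin(Bt)|³. -/
/-
On the support of `f ⊗ g` all four coordinates are bounded by some `R`. There the bracket,
multiplied by `sin² (Bt)`, is at most `a + b t²`: the `cot` and `1/sin²` singularities are
absorbed by `sin²`, and the drift `u t` contributes the `t²`. Hence
`|K_t| ≤ c e^{γt} (a + b t²) / |sin (Bt)|³` on a ball and `K_t = 0` off it, and
`t² e^{γt} ≤ 2 (δ - γ)⁻² e^{δt}` because `γ < δ`. A function bounded by `c` on a set of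
measure `V` and vanishing elsewhere has `L²` norm at most `√V c`.
-/

open MeasureTheory

lemma sqrt_integral_norm_sq_le_of_le_indicator {α E : Type*} [MeasurableSpace α]
    [NormedAddCommGroup E] {μ : Measure α} {h : α → E} {s : Set α} (hs : MeasurableSet s)
    (hμs : μ s ≠ ⊤) {c : ℝ} (hc : 0 ≤ c) (hh : ∀ x, ‖h x‖ ≤ s.indicator (fun _ => c) x) :
    Real.sqrt (∫ x, ‖h x‖ ^ 2 ∂μ) ≤ Real.sqrt (μ.real s) * c := by
  have hsq : ∀ x, ‖h x‖ ^ 2 ≤ s.indicator (fun _ => c ^ 2) x := fun x => by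
    by_cases hx : x ∈ s
    · have := hh x
      rw [Set.indicator_of_mem hx] at this ⊢
      exact pow_le_pow_left₀ (norm_nonneg _) this 2
    · have := hh x
      rw [Set.indicator_of_notMem hx] at this ⊢
      simp [le_antisymm this (norm_nonneg _)]
  have hint : ∫ x, ‖h x‖ ^ 2 ∂μ ≤ μ.real s * c ^ 2 := by
    refine (integral_mono_of_nonneg (.of_forall fun x => by positivity)
      ((integrable_indicator_iff hs).2 (integrableOn_const hμs)) (.of_forall hsq)).trans_eq ?_
    rw [integral_indicator_const _ hs, smul_eq_mul]
  calc Real.sqrt (∫ x, ‖h x‖ ^ 2 ∂μ) ≤ Real.sqrt (μ.real s * c ^ 2) := Real.sqrt_le_sqrt hint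
    _ = Real.sqrt (μ.real s) * c := by rw [Real.sqrt_mul measureReal_nonneg, Real.sqrt_sq hc]

lemma sq_mul_exp_le {γ δ t : ℝ} (hγδ : γ < δ) (ht : 0 ≤ t) :
    t ^ 2 * Real.exp (γ * t) ≤ 2 / (δ - γ) ^ 2 * Real.exp (δ * t) := by
  have hε : 0 < δ - γ := sub_pos.2 hγδ
  have hquad : ((δ - γ) * t) ^ 2 / 2 ≤ Real.exp ((δ - γ) * t) := by
    nlinarith [Real.quadratic_le_exp_of_nonneg (mul_nonneg hε.le ht)]
  have hsplit : Real.exp (δ * t) = Real.exp ((δ - γ) * t) * Real.exp (γ * t) := by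
    rw [← Real.exp_add]; ring_nf
  rw [hsplit, div_mul_eq_mul_div, le_div_iff₀ (by positivity)]
  nlinarith [Real.exp_pos (γ * t)]

lemma exp_mul_mul_add_mul_sq_le {γ δ t a b : ℝ} (hγδ : γ < δ) (ht : 0 ≤ t) (ha : 0 ≤ a)
    (hb : 0 ≤ b) :
    Real.exp (γ * t) * (a + b * t ^ 2) ≤ (a + 2 * b / (δ - γ) ^ 2) * Real.exp (δ * t) := by
  have h0 : Real.exp (γ * t) ≤ Real.exp (δ * t) :=
    Real.exp_le_exp.2 (mul_le_mul_of_nonneg_right hγδ.le ht)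
  calc Real.exp (γ * t) * (a + b * t ^ 2)
      = a * Real.exp (γ * t) + b * (t ^ 2 * Real.exp (γ * t)) := by ring
    _ ≤ a * Real.exp (δ * t) + b * (2 / (δ - γ) ^ 2 * Real.exp (δ * t)) :=
      add_le_add (mul_le_mul_of_nonneg_left h0 ha)
        (mul_le_mul_of_nonneg_left (sq_mul_exp_le hγδ ht) hb)
    _ = (a + 2 * b / (δ - γ) ^ 2) * Real.exp (δ * t) := by ring

lemma Real.abs_cot_mul_sin_sq_le_one (x : ℝ) : |Real.cot x| * Real.sin x ^ 2 ≤ 1 := by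
  rcases eq_or_ne (Real.sin x) 0 with h | h
  · simp [h]
  rw [Real.cot_eq_cos_div_sin, abs_div, ← sq_abs, div_mul_eq_mul_div, pow_two,
    ← mul_assoc, mul_div_cancel_right₀ _ (abs_ne_zero.2 h)]
  exact mul_le_one₀ (Real.abs_cos_le_one x) (abs_nonneg _) (Real.abs_sin_le_one x)

lemma div_mul_le_self {K : Type*} [Field K] [LinearOrder K] [IsStrictOrderedRing K] {a : K}
    (ha : 0 ≤ a) (b : K) : a / b * b ≤ a := by
  rcases eq_or_ne b 0 with h | h
  · simpa [h] using ha
  · rw [div_mul_cancel₀ _ h]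

namespace CrossedFields

/-- The square-bracket factor of `K_t`. -/
noncomputable def bracket (B F γ t : ℝ) (q : ℝ × ℝ × ℝ × ℝ) : ℂ :=
  (γ : ℂ) + (B * Real.cot (B*t) : ℝ)
    + (Complex.I/4) * (((F/B)^2 : ℝ) - (2*F*(q.1 + q.2.2.1) : ℝ)
        - ((B^2/(Real.sin (B*t))^2) : ℝ)
            * (((q.1 - q.2.2.1)^2 + (q.2.1 - q.2.2.2 + (F/B)*t)^2 : ℝ))
        + (2*F*Real.cot (B*t)*(q.2.1 - q.2.2.2 + (F/B)*t) : ℝ))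

lemma norm_bracket_le (B F γ t x y x₀ y₀ : ℝ) :
    ‖bracket B F γ t (x, y, x₀, y₀)‖ ≤ |γ| + |B| * |Real.cot (B * t)|
      + ((F / B) ^ 2 + 2 * |F| * |x + x₀|
        + B ^ 2 / Real.sin (B * t) ^ 2 * ((x - x₀) ^ 2 + (y - y₀ + F / B * t) ^ 2)
        + 2 * |F| * |Real.cot (B * t)| * |y - y₀ + F / B * t|) / 4 := by
  set c := Real.cot (B * t)
  set w := y - y₀ + F / B * t
  set D := B ^ 2 / Real.sin (B * t) ^ 2 * ((x - x₀) ^ 2 + w ^ 2)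
  have hD : 0 ≤ D := by positivity
  set Y := (F / B) ^ 2 - 2 * F * (x + x₀) - D + 2 * F * c * w
  have hsplit :
      bracket B F γ t (x, y, x₀, y₀) = ((γ + B * c : ℝ) : ℂ) + Complex.I / 4 * (Y : ℂ) := by
    simp only [bracket, Y, D, w, c]; push_cast; ring
  have hY : |Y| ≤ (F / B) ^ 2 + 2 * |F| * |x + x₀| + D + 2 * |F| * |c| * |w| := by
    have h1 : |2 * F * (x + x₀)| = 2 * |F| * |x + x₀| := by rw [abs_mul, abs_mul, abs_two]
    have h2 : |2 * F * c * w| = 2 * |F| * |c| * |w| := by rw [abs_mul, abs_mul, abs_mul, abs_two]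
    rw [abs_le]
    constructor <;> linarith [le_abs_self (2 * F * (x + x₀)), neg_abs_le (2 * F * (x + x₀)),
      le_abs_self (2 * F * c * w), neg_abs_le (2 * F * c * w), sq_nonneg (F / B)]
  have hr : |γ + B * c| ≤ |γ| + |B| * |c| := (abs_add_le _ _).trans_eq (by rw [abs_mul])
  rw [hsplit]
  refine (norm_add_le _ _).trans ?_
  rw [norm_mul, Complex.norm_real, Complex.norm_real, Real.norm_eq_abs, Real.norm_eq_abs]
  have hI : ‖Complex.I / 4‖ = 1 / 4 := by simp
  rw [hI]
  linarith

lemma norm_bracket_mul_sin_sq_le {B F γ t x y x₀ y₀ R : ℝ} (hx : |x| ≤ R) (hx₀ : |x₀| ≤ R) :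
    ‖bracket B F γ t (x, y, x₀, y₀)‖ * Real.sin (B * t) ^ 2 ≤ |γ| + |B|
      + ((F / B) ^ 2 + 4 * |F| * R + B ^ 2 * (4 * R ^ 2 + (y - y₀ + F / B * t) ^ 2)
        + 2 * |F| * |y - y₀ + F / B * t|) / 4 := by
  set s := Real.sin (B * t)
  set c := Real.cot (B * t)
  set w := y - y₀ + F / B * t
  have hs : s ^ 2 ≤ 1 := by rw [sq_le_one_iff_abs_le_one]; exact Real.abs_sin_le_one _
  have hcs : |c| * s ^ 2 ≤ 1 := Real.abs_cot_mul_sin_sq_le_one _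
  have hBs : B ^ 2 / s ^ 2 * s ^ 2 ≤ B ^ 2 := div_mul_le_self (sq_nonneg B) _
  have hxx : |x + x₀| ≤ 2 * R := (abs_add_le _ _).trans (by linarith)
  have hd : (x - x₀) ^ 2 + w ^ 2 ≤ 4 * R ^ 2 + w ^ 2 := by
    have := (abs_sub _ _).trans (add_le_add hx hx₀)
    nlinarith [sq_abs (x - x₀), abs_nonneg (x - x₀)]
  calc ‖bracket B F γ t (x, y, x₀, y₀)‖ * s ^ 2
      ≤ (|γ| + |B| * |c| + ((F / B) ^ 2 + 2 * |F| * |x + x₀|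
        + B ^ 2 / s ^ 2 * ((x - x₀) ^ 2 + w ^ 2) + 2 * |F| * |c| * |w|) / 4) * s ^ 2 := by
        gcongr; exact norm_bracket_le B F γ t x y x₀ y₀
    _ = |γ| * s ^ 2 + |B| * (|c| * s ^ 2) + ((F / B) ^ 2 * s ^ 2 + 2 * |F| * |x + x₀| * s ^ 2
        + B ^ 2 / s ^ 2 * s ^ 2 * ((x - x₀) ^ 2 + w ^ 2) + 2 * |F| * |w| * (|c| * s ^ 2)) / 4 := by
        ring
    _ ≤ |γ| + |B| + ((F / B) ^ 2 + 4 * |F| * R + B ^ 2 * (4 * R ^ 2 + w ^ 2)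
        + 2 * |F| * |w|) / 4 := by
        gcongr ?_ + ?_ + (?_ + ?_ + ?_ + ?_) / 4
        · exact mul_le_of_le_one_right (abs_nonneg γ) hs
        · exact mul_le_of_le_one_right (abs_nonneg B) hcs
        · exact mul_le_of_le_one_right (sq_nonneg _) hs
        · refine (mul_le_of_le_one_right (by positivity) hs).trans ?_
          linarith [mul_le_mul_of_nonneg_left hxx (by positivity : (0 : ℝ) ≤ 2 * |F|)]
        · exact mul_le_mul hBs hd (by positivity) (sq_nonneg B)
        · exact mul_le_of_le_one_right (by positivity) hcs

lemma exists_norm_bracket_mul_sin_sq_le (B F γ R : ℝ) :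
    ∃ a b : ℝ, 0 ≤ a ∧ 0 ≤ b ∧ ∀ (t : ℝ) (q : ℝ × ℝ × ℝ × ℝ), ‖q‖ ≤ R →
      ‖bracket B F γ t q‖ * Real.sin (B * t) ^ 2 ≤ a + b * t ^ 2 := by
  set u := F / B
  refine ⟨|γ| + |B| + (u ^ 2 + |F| + 4 * |F| * |R| + 4 * B ^ 2 * R ^ 2
      + 8 * (B ^ 2 + |F|) * R ^ 2) / 4, (B ^ 2 + |F|) * u ^ 2 / 2, by positivity, by positivity,
    fun t ⟨x, y, x₀, y₀⟩ hq => ?_⟩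
  simp only [Prod.norm_def, max_le_iff, Real.norm_eq_abs] at hq
  obtain ⟨hx, hy, hx₀, hy₀⟩ := hq
  set w := y - y₀ + u * t
  have hw : w ^ 2 ≤ 8 * R ^ 2 + 2 * u ^ 2 * t ^ 2 := by
    have := (abs_sub _ _).trans (add_le_add hy hy₀)
    have : (y - y₀) ^ 2 ≤ 4 * R ^ 2 := by nlinarith [sq_abs (y - y₀), abs_nonneg (y - y₀)]
    nlinarith [sq_nonneg (y - y₀ - u * t)]
  have hw' : 2 * |w| ≤ 1 + w ^ 2 := by
    have := sq_nonneg (|w| - 1)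
    rw [sub_sq, sq_abs] at this
    linarith
  refine (norm_bracket_mul_sin_sq_le (hx.trans (le_abs_self R))
    (hx₀.trans (le_abs_self R))).trans ?_
  rw [sq_abs]
  have := mul_le_mul_of_nonneg_left hw (sq_nonneg B)
  have := mul_le_mul_of_nonneg_left (hw'.trans (add_le_add_right hw 1)) (abs_nonneg F)
  linarith

noncomputable def kernel (B F γ : ℝ) (f g : ℝ × ℝ → ℂ) (Φ : ℝ → ℝ × ℝ × ℝ × ℝ → ℝ) (t : ℝ)
    (q : ℝ × ℝ × ℝ × ℝ) : ℂ :=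
  ((2*Real.pi)⁻¹ : ℝ) * (Real.sqrt (B/2) : ℝ) * (Real.exp (γ*t) : ℝ)
    * f (q.1, q.2.1) * g (q.2.2.1, q.2.2.2)
    * Complex.exp (Complex.I * (Φ t q : ℝ))
    * ((Real.sin (B*t))⁻¹ : ℝ) * bracket B F γ t q

lemma norm_kernel (B F γ : ℝ) (f g : ℝ × ℝ → ℂ) (Φ : ℝ → ℝ × ℝ × ℝ × ℝ → ℝ) (t : ℝ)
    (q : ℝ × ℝ × ℝ × ℝ) :
    ‖kernel B F γ f g Φ t q‖ = (2 * Real.pi)⁻¹ * Real.sqrt (B / 2) * Real.exp (γ * t)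
      * ‖f (q.1, q.2.1)‖ * ‖g (q.2.2.1, q.2.2.2)‖ * |Real.sin (B * t)|⁻¹
      * ‖bracket B F γ t q‖ := by
  simp only [kernel, norm_mul, Complex.norm_real, Real.norm_eq_abs, Complex.norm_exp_I_mul_ofReal,
    abs_inv, Real.abs_exp, abs_of_nonneg (Real.sqrt_nonneg _), abs_of_pos Real.two_pi_pos, mul_one]

lemma exists_norm_le_of_ne_zero {E : Type*} [Zero E] [TopologicalSpace E] {f g : ℝ × ℝ → E}
    (hf : HasCompactSupport f) (hg : HasCompactSupport g) :
    ∃ R, ∀ q : ℝ × ℝ × ℝ × ℝ, f (q.1, q.2.1) ≠ 0 → g (q.2.2.1, q.2.2.2) ≠ 0 → ‖q‖ ≤ R := by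
  obtain ⟨Rf, hRf⟩ := isBounded_iff_forall_norm_le.1 hf.isCompact.isBounded
  obtain ⟨Rg, hRg⟩ := isBounded_iff_forall_norm_le.1 hg.isCompact.isBounded
  refine ⟨max Rf Rg, fun ⟨x, y, x₀, y₀⟩ hfq hgq => ?_⟩
  have hxy := hRf _ (subset_tsupport f hfq)
  have hxy₀ := hRg _ (subset_tsupport g hgq)
  simp only [Prod.norm_def, max_le_iff] at hxy hxy₀ ⊢
  exact ⟨le_max_of_le_left hxy.1, le_max_of_le_left hxy.2, le_max_of_le_right hxy₀.1,
    le_max_of_le_right hxy₀.2⟩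

lemma norm_kernel_le_indicator {B F γ δ t Mf Mg R a b : ℝ} {f g : ℝ × ℝ → ℂ}
    {Φ : ℝ → ℝ × ℝ × ℝ × ℝ → ℝ} (hγδ : γ < δ) (ht : 0 ≤ t) (hs : Real.sin (B * t) ≠ 0)
    (ha : 0 ≤ a) (hb : 0 ≤ b) (hMf : ∀ p, ‖f p‖ ≤ Mf) (hMg : ∀ p, ‖g p‖ ≤ Mg)
    (hR : ∀ q : ℝ × ℝ × ℝ × ℝ, f (q.1, q.2.1) ≠ 0 → g (q.2.2.1, q.2.2.2) ≠ 0 → ‖q‖ ≤ R)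
    (hbr : ∀ q : ℝ × ℝ × ℝ × ℝ, ‖q‖ ≤ R →
      ‖bracket B F γ t q‖ * Real.sin (B * t) ^ 2 ≤ a + b * t ^ 2)
    (q : ℝ × ℝ × ℝ × ℝ) :
    ‖kernel B F γ f g Φ t q‖ ≤ (Metric.closedBall 0 R).indicator (fun _ =>
      (2 * Real.pi)⁻¹ * Real.sqrt (B / 2) * Mf * Mg * (a + 2 * b / (δ - γ) ^ 2)
        * Real.exp (δ * t) / |Real.sin (B * t)| ^ 3) q := by
  have hMf₀ : 0 ≤ Mf := (norm_nonneg _).trans (hMf 0)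
  have hMg₀ : 0 ≤ Mg := (norm_nonneg _).trans (hMg 0)
  by_cases hq : f (q.1, q.2.1) ≠ 0 ∧ g (q.2.2.1, q.2.2.2) ≠ 0
  · rw [Set.indicator_of_mem (mem_closedBall_zero_iff.2 (hR q hq.1 hq.2)), norm_kernel]
    have hsa : 0 < |Real.sin (B * t)| := abs_pos.2 hs
    calc (2 * Real.pi)⁻¹ * Real.sqrt (B / 2) * Real.exp (γ * t) * ‖f (q.1, q.2.1)‖
          * ‖g (q.2.2.1, q.2.2.2)‖ * |Real.sin (B * t)|⁻¹ * ‖bracket B F γ t q‖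
        = (2 * Real.pi)⁻¹ * Real.sqrt (B / 2) * ‖f (q.1, q.2.1)‖ * ‖g (q.2.2.1, q.2.2.2)‖
          * (Real.exp (γ * t) * (‖bracket B F γ t q‖ * Real.sin (B * t) ^ 2))
          / |Real.sin (B * t)| ^ 3 := by
          rw [← sq_abs (Real.sin (B * t))]; field_simp
      _ ≤ (2 * Real.pi)⁻¹ * Real.sqrt (B / 2) * Mf * Mg * (Real.exp (γ * t) * (a + b * t ^ 2))
          / |Real.sin (B * t)| ^ 3 := by
          gcongr
          exacts [hMf _, hMg _, hbr q (hR q hq.1 hq.2)]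
      _ ≤ (2 * Real.pi)⁻¹ * Real.sqrt (B / 2) * Mf * Mg
          * ((a + 2 * b / (δ - γ) ^ 2) * Real.exp (δ * t)) / |Real.sin (B * t)| ^ 3 := by
          gcongr _ * ?_ / _
          exact exp_mul_mul_add_mul_sq_le hγδ ht ha hb
      _ = _ := by ring
  · have hzero : kernel B F γ f g Φ t q = 0 := by
      rcases not_and_or.1 hq with h | h <;> simp [kernel, not_not.1 h]
    rw [hzero, norm_zero]
    exact Set.indicator_nonneg (fun _ _ => by positivity) q

end CrossedFields

open CrossedFields in
theorem stmt9_general (B F γ δ : ℝ) (hγδ : γ < δ)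
    (f g : ℝ × ℝ → ℂ) (Φ : ℝ → ℝ × ℝ × ℝ × ℝ → ℝ)
    (hfb : ∃ M, ∀ p, ‖f p‖ ≤ M) (hgb : ∃ M, ∀ p, ‖g p‖ ≤ M)
    (hfs : HasCompactSupport f) (hgs : HasCompactSupport g) :
    ∃ C > 0, ∀ t > 0, Real.sin (B*t) ≠ 0 →
      Real.sqrt (∫ q : ℝ × ℝ × ℝ × ℝ,
        ‖((2*Real.pi)⁻¹ : ℝ) * (Real.sqrt (B/2) : ℝ) * (Real.exp (γ*t) : ℝ)
            * f (q.1, q.2.1) * g (q.2.2.1, q.2.2.2)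
            * Complex.exp (Complex.I * (Φ t q : ℝ))
            * ((Real.sin (B*t))⁻¹ : ℝ)
            * ((γ : ℂ) + (B * Real.cot (B*t) : ℝ)
                + (Complex.I/4) * (((F/B)^2 : ℝ) - (2*F*(q.1 + q.2.2.1) : ℝ)
                    - ((B^2/(Real.sin (B*t))^2) : ℝ)
                        * (((q.1 - q.2.2.1)^2 + (q.2.1 - q.2.2.2 + (F/B)*t)^2 : ℝ))
                    + (2*F*Real.cot (B*t)*(q.2.1 - q.2.2.2 + (F/B)*t) : ℝ)))‖^2)
        ≤ C * Real.exp (δ*t) / |Real.sin (B*t)|^3 := by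
  obtain ⟨Mf, hMf⟩ := hfb
  obtain ⟨Mg, hMg⟩ := hgb
  obtain ⟨R, hR⟩ := exists_norm_le_of_ne_zero hfs hgs
  obtain ⟨a, b, ha, hb, hbr⟩ := exists_norm_bracket_mul_sin_sq_le B F γ R
  set V := volume.real (Metric.closedBall (0 : ℝ × ℝ × ℝ × ℝ) R)
  set K := (2 * Real.pi)⁻¹ * Real.sqrt (B / 2) * Mf * Mg * (a + 2 * b / (δ - γ) ^ 2)
  have hK : 0 ≤ K := by
    have := (norm_nonneg _).trans (hMf 0)
    have := (norm_nonneg _).trans (hMg 0)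
    positivity
  refine ⟨Real.sqrt V * K + 1, by positivity, fun t ht hs => ?_⟩
  change Real.sqrt (∫ q, ‖kernel B F γ f g Φ t q‖ ^ 2) ≤ _
  calc Real.sqrt (∫ q, ‖kernel B F γ f g Φ t q‖ ^ 2)
      ≤ Real.sqrt V * (K * Real.exp (δ * t) / |Real.sin (B * t)| ^ 3) :=
        sqrt_integral_norm_sq_le_of_le_indicator measurableSet_closedBall
          measure_closedBall_lt_top.ne (by positivity)
          (norm_kernel_le_indicator hγδ ht.le hs ha hb hMf hMg hR (hbr t))
    _ ≤ (Real.sqrt V * K + 1) * Real.exp (δ * t) / |Real.sin (B * t)| ^ 3 := by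
        rw [← mul_div_assoc, ← mul_assoc]
        gcongr
        linarith

/-- Hilbert–Schmidt bound on the kernel of `G'(t)`: for bounded measurable compactly
supported `f, g` and an arbitrary measurable real phase `Φ_t`, the `L²(ℝ⁴)` norm of the
kernel `K_t` is bounded by `C·e^{δt}/|sin(Bt)|³`, with `C` depending only on
`f, g, F, B, γ, δ` (and not on `t`). -/
theorem stmt9 (B F γ δ : ℝ) (hB : 0 < B) (hγδ : γ < δ) (hδ : δ < 0)
    (f g : ℝ × ℝ → ℂ) (Φ : ℝ → ℝ × ℝ × ℝ × ℝ → ℝ)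
    (hf : Measurable f) (hg : Measurable g)
    (hfb : ∃ M, ∀ p, ‖f p‖ ≤ M) (hgb : ∃ M, ∀ p, ‖g p‖ ≤ M)
    (hfs : HasCompactSupport f) (hgs : HasCompactSupport g)
    (hΦ : ∀ t > 0, Measurable (Φ t)) :
    ∃ C > 0, ∀ t > 0, Real.sin (B*t) ≠ 0 →
      Real.sqrt (∫ q : ℝ × ℝ × ℝ × ℝ,
        ‖((2*Real.pi)⁻¹ : ℝ) * (Real.sqrt (B/2) : ℝ) * (Real.exp (γ*t) : ℝ)
            * f (q.1, q.2.1) * g (q.2.2.1, q.2.2.2)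
            * Complex.exp (Complex.I * (Φ t q : ℝ))
            * ((Real.sin (B*t))⁻¹ : ℝ)
            * ((γ : ℂ) + (B * Real.cot (B*t) : ℝ)
                + (Complex.I/4) * (((F/B)^2 : ℝ) - (2*F*(q.1 + q.2.2.1) : ℝ)
                    - ((B^2/(Real.sin (B*t))^2) : ℝ)
                        * (((q.1 - q.2.2.1)^2 + (q.2.1 - q.2.2.2 + (F/B)*t)^2 : ℝ))
                    + (2*F*Real.cot (B*t)*(q.2.1 - q.2.2.2 + (F/B)*t) : ℝ)))‖^2)
        ≤ C * Real.exp (δ*t) / |Real.sin (B*t)|^3 :=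
  stmt9_general B F γ δ hγδ f g Φ hfb hgb hfs hgs
end
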